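/- Let (X, μ) be a measure space, let T : X → X be a measurable map preserving μ (i.e. μ(T⁻¹(A)) = μ(A) for every measurable set A), and let Θ : X → ℝ be a measurable function such that μ({x : Θ(x) ≤ a₀}) < ∞ for some a₀ > 0 and μ({x : Θ(x) ≤ 0}) = 0. Then the set {x ∈ X : Θ(Tⁿ(x)) → 0 as n → ∞} has μ-measure zero. -/

import Mathlib

/-!
Orbits that converge into the cusp eventually stay in every sublevel set `{Θ ≤ a}`, and by
Fatou's lemma for sets and invariance of `μ` the points whose orbit eventually stays in a set
have measure at most that of the set. Letting `a ↓ 0`, continuity from above (available because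
`{Θ ≤ a₀}` has finite measure) bounds their measure by `μ {Θ ≤ 0} = 0`.
-/

open Filter Set Topology

namespace MeasureTheory

variable {α : Type*} [MeasurableSpace α] {μ : Measure α}

theorem measure_liminf_atTop_le_liminf (s : ℕ → Set α) :
    μ (liminf s atTop) ≤ liminf (fun n => μ (s n)) atTop := by
  have htail : Monotone fun n => ⋂ i ≥ n, s i :=
    fun m n hmn => biInter_mono (fun i hi => hmn.trans hi) fun _ _ => le_rfl
  simp only [liminf_eq_iSup_iInf_of_nat, iSup_eq_iUnion, iInf_eq_iInter]
  rw [htail.measure_iUnion]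
  exact iSup_mono fun n => le_iInf₂ fun i hi => measure_mono (biInter_subset_of_mem hi)

theorem MeasurePreserving.measure_setOf_eventually_mem_le {T : α → α}
    (hT : MeasurePreserving T μ μ) (s : Set α) :
    μ {x | ∀ᶠ n in atTop, T^[n] x ∈ s} ≤ μ s :=
  calc μ {x | ∀ᶠ n in atTop, T^[n] x ∈ s}
      = μ (liminf (fun n => T^[n] ⁻¹' s) atTop) := by
        simp only [← mem_preimage, ← mem_liminf_iff_eventually_mem, ofPred_mem_eq]
    _ ≤ liminf (fun n => μ (T^[n] ⁻¹' s)) atTop := measure_liminf_atTop_le_liminf _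
    _ ≤ μ s := liminf_le_of_frequently_le' <|
        Frequently.of_forall fun n => (hT.iterate n).measure_preimage_le s

theorem tendsto_measure_setOf_le_nhdsGT {β : Type*} [LinearOrder β] [TopologicalSpace β]
    [OrderTopology β] [DenselyOrdered β] [FirstCountableTopology β] [MeasurableSpace β]
    [OpensMeasurableSpace β] {f : α → β} (hf : AEMeasurable f μ) {a b : β} (hab : a < b)
    (hb : μ {x | f x ≤ b} ≠ ⊤) :
    Tendsto (fun r => μ {x | f x ≤ r}) (𝓝[>] a) (𝓝 (μ {x | f x ≤ a})) := by
  have hinter : ⋂ r > a, {x | f x ≤ r} = {x | f x ≤ a} := by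
    ext x
    simpa only [mem_iInter, mem_ofPred_eq] using
      ⟨le_of_forall_gt_imp_ge_of_dense, fun h r hr => h.trans hr.le⟩
  rw [← hinter]
  exact tendsto_measure_biInter_gt (fun r _ => hf.nullMeasurable measurableSet_Iic)
    (fun _ _ _ hij _ hx => le_trans hx hij) ⟨b, hab, hb⟩

end MeasureTheory

open MeasureTheory

/-- If `T` preserves `μ`, the sublevel set `{Θ ≤ a₀}` has finite measure for some `a₀ > 0`
and `{Θ ≤ 0}` is `μ`-null, then the set of points `x` with `Θ(Tⁿ(x)) → 0` is `μ`-null. -/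
theorem tendsto_zero_in_finite_cusp_null {X : Type*} [MeasurableSpace X]
    (μ : Measure X) (T : X → X) (hT : MeasurePreserving T μ μ)
    (Θ : X → ℝ) (hΘ : Measurable Θ)
    (a₀ : ℝ) (ha₀ : 0 < a₀) (hfin : μ {x : X | Θ x ≤ a₀} < ⊤)
    (hnull : μ {x : X | Θ x ≤ 0} = 0) :
    μ {x : X | Tendsto (fun n : ℕ => Θ (T^[n] x)) atTop (nhds 0)} = 0 := by
  have hle : ∀ a > 0, μ {x | Tendsto (fun n : ℕ => Θ (T^[n] x)) atTop (nhds 0)} ≤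
      μ {x | Θ x ≤ a} := fun a ha =>
    (measure_mono fun _ hx => hx.eventually (eventually_le_nhds ha)).trans
      (hT.measure_setOf_eventually_mem_le {x | Θ x ≤ a})
  have hlim := tendsto_measure_setOf_le_nhdsGT hΘ.aemeasurable ha₀ hfin.ne
  rw [hnull] at hlim
  exact nonpos_iff_eq_zero.1 (ge_of_tendsto hlim (eventually_nhdsWithin_of_forall hle))
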